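/- arXiv:2312.01821 — 2 statements merged into one kernel-verified Lean document; each statement's English description precedes it below -/
import Mathlib

section
/- For g ≡ 3 (mod 4), the Accola-Maclachlan group AM_g and the Kulkarni group K_g are not isomorphic. -/
/-- Relators of the Accola–Maclachlan group
`AM_g = ⟨a, b | a^(2g+2) = b^4 = (ab)^2 = [a,b^2] = 1⟩` with `[x,y] = x⁻¹y⁻¹xy`. -/
def amRels (g : ℕ) : Set (FreeGroup (Fin 2)) :=
  { (FreeGroup.of 0) ^ (2 * g + 2),
    (FreeGroup.of 1) ^ 4,
    (FreeGroup.of 0 * FreeGroup.of 1) ^ 2,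
    (FreeGroup.of 0)⁻¹ * ((FreeGroup.of 1) ^ 2)⁻¹ * FreeGroup.of 0 * (FreeGroup.of 1) ^ 2 }

/-- Relators of the Kulkarni group
`K_g = ⟨a, b | a^(2g+2) = b^4 = (ab)^2 = 1, b²ab² = a^(g+2)⟩`. -/
def kRels (g : ℕ) : Set (FreeGroup (Fin 2)) :=
  { (FreeGroup.of 0) ^ (2 * g + 2),
    (FreeGroup.of 1) ^ 4,
    (FreeGroup.of 0 * FreeGroup.of 1) ^ 2,
    (FreeGroup.of 1) ^ 2 * FreeGroup.of 0 * (FreeGroup.of 1) ^ 2 *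
      ((FreeGroup.of 0) ^ (g + 2))⁻¹ }

/-!
The two groups are told apart by their central involutions. In `AM_g` both `a^(g+1)` and `b^2`
are central involutions, and they are distinct because the character `a, b ↦ 1 ∈ ℤ/4` sends
them to `0` and `2`. In `K_g` every element is `a^i b^j`; a central one has `b^j` commuting with
`a`, which `b²ab² = a^(g+2)` allows only for `b^j = 1`, so the central involutions of `K_g` lie
in the cyclic group `⟨a⟩` of order `2g+2` and equal `a^(g+1)`. In both groups `a` has order
exactly `2g+2`, as seen from their actions on the `2g+2` cosets of `⟨b⟩`.
-/

open Subgroup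

def centralInvolutions (G : Type*) [Group G] : Set G :=
  {z | z ∈ center G ∧ orderOf z = 2}

section Group

variable {G H : Type*} [Group G] [Group H]

theorem MulEquiv.mapsTo_centralInvolutions (e : G ≃* H) :
    Set.MapsTo e (centralInvolutions G) (centralInvolutions H) := fun z ⟨hz, hz2⟩ =>
  ⟨(centerCongr e ⟨z, hz⟩).2, by rwa [MulEquiv.orderOf_eq]⟩

theorem MulEquiv.centralInvolutions_subsingleton (e : G ≃* H)
    (h : (centralInvolutions H).Subsingleton) : (centralInvolutions G).Subsingleton :=
  (h.preimage e.injective).anti e.mapsTo_centralInvolutions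

theorem orderOf_eq_of_pow_eq_one_of_orderOf_map {a : G} {N : ℕ} (ha : a ^ N = 1) (φ : G →* H)
    (hφ : orderOf (φ a) = N) : orderOf a = N :=
  Nat.dvd_antisymm (orderOf_dvd_of_pow_eq_one ha) (hφ ▸ orderOf_map_dvd φ a)

theorem zpow_eq_pow_of_orderOf_zpow_eq_two {a : G} {n : ℕ} (ha : orderOf a = 2 * n) {i : ℤ}
    (hi : orderOf (a ^ i) = 2) : a ^ i = a ^ n := by
  have h2n : a ^ (2 * n : ℤ) = 1 := by exact_mod_cast ha ▸ pow_orderOf_eq_one a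
  obtain ⟨t, rfl⟩ : (n : ℤ) ∣ i := by
    have : a ^ (i * 2) = 1 := by rw [zpow_mul, ← orderOf_dvd_iff_zpow_eq_one, hi]; norm_num
    rw [← orderOf_dvd_iff_zpow_eq_one, ha, mul_comm i] at this
    push_cast at this
    exact (mul_dvd_mul_iff_left two_ne_zero).mp this
  obtain ⟨s, rfl | rfl⟩ := Int.even_or_odd' t
  · rw [show (n : ℤ) * (2 * s) = 2 * n * s by ring, zpow_mul, h2n, one_zpow, orderOf_one] at hi
    norm_num at hi
  · rw [show (n : ℤ) * (2 * s + 1) = 2 * n * s + n by ring, zpow_add, zpow_mul, h2n, one_zpow,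
      one_mul, zpow_natCast]

variable {a b : G}

theorem inv_eq_pow_three_of_pow_four (hb : b ^ 4 = 1) : b⁻¹ = b ^ 3 :=
  inv_eq_of_mul_eq_one_left (by rw [← pow_succ, hb])

theorem inv_sq_eq_sq_of_pow_four (hb : b ^ 4 = 1) : (b ^ 2)⁻¹ = b ^ 2 :=
  inv_eq_of_mul_eq_one_left (by rw [← pow_add, hb])

theorem pow_eq_pow_mod_four (hb : b ^ 4 = 1) (j : ℕ) : b ^ j = b ^ (j % 4) := by
  conv_lhs => rw [← Nat.div_add_mod j 4, pow_add, pow_mul, hb, one_pow, one_mul]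

theorem mul_eq_inv_mul_inv_of_mul_sq (hab : (a * b) ^ 2 = 1) : b * a = a⁻¹ * b⁻¹ := by
  calc b * a = a⁻¹ * (a * b * (a * b)) * b⁻¹ := by group
    _ = a⁻¹ * b⁻¹ := by rw [← pow_two, hab, mul_one]

theorem conj_eq_inv_mul_sq (hb : b ^ 4 = 1) (hab : (a * b) ^ 2 = 1) :
    b * a * b⁻¹ = a⁻¹ * b ^ 2 := by
  rw [mul_eq_inv_mul_inv_of_mul_sq hab, mul_assoc, ← mul_inv_rev, ← pow_two,
    inv_sq_eq_sq_of_pow_four hb]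

theorem commute_pow_of_commute_sq {n : ℕ} (hb : b ^ 4 = 1) (hab : (a * b) ^ 2 = 1)
    (hab2 : Commute a (b ^ 2)) (ha : a ^ (2 * n) = 1) (hn : Even n) : Commute b (a ^ n) := by
  obtain ⟨k, rfl⟩ := hn
  have hconj : b * a ^ (k + k) * b⁻¹ = a ^ (k + k) := by
    rw [← conj_pow, conj_eq_inv_mul_sq hb hab, (hab2.inv_left).mul_pow, inv_pow,
      ← pow_mul, show 2 * (k + k) = 4 * k by ring, pow_mul, hb, one_pow, mul_one]
    exact inv_eq_of_mul_eq_one_left (by rw [← pow_add, ← two_mul, ha])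
  exact mul_inv_eq_iff_eq_mul.mp hconj

theorem exists_pow_mul_eq_zpow_mul_pow {m : ℕ} (hb : b ^ 4 = 1) (hab : (a * b) ^ 2 = 1)
    (hk : b ^ 2 * a * b ^ 2 = a ^ (m + 1)) (j : ℕ) :
    ∃ (i : ℤ) (k : ℕ), b ^ j * a = a ^ i * b ^ k := by
  have hba : b * a = a⁻¹ * b ^ 3 := by
    rw [mul_eq_inv_mul_inv_of_mul_sq hab, inv_eq_pow_three_of_pow_four hb]
  have hb2a : b ^ 2 * a = a ^ (m + 1) * b ^ 2 := by
    rw [← hk, mul_assoc _ (b ^ 2), ← pow_add, hb, mul_one]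
  rw [pow_eq_pow_mod_four hb j]
  have : j % 4 < 4 := Nat.mod_lt _ (by norm_num)
  interval_cases j % 4
  · exact ⟨1, 0, by simp⟩
  · exact ⟨-1, 3, by rw [pow_one, hba, zpow_neg_one]⟩
  · exact ⟨(m + 1 : ℕ), 2, by rw [hb2a, zpow_natCast]⟩
  · refine ⟨-(m + 1 : ℕ), 1, ?_⟩
    calc b ^ 3 * a = b ^ 2 * a⁻¹ * b ^ 2 * b := by rw [pow_succ b 2, mul_assoc, hba]; group
      _ = ((b ^ 2)⁻¹ * a * (b ^ 2)⁻¹)⁻¹ * b := by group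
      _ = a ^ (-(m + 1 : ℕ) : ℤ) * b ^ 1 := by
        rw [inv_sq_eq_sq_of_pow_four hb, hk, zpow_neg, zpow_natCast, pow_one]

theorem pow_eq_one_of_commute {m j : ℕ} (hb : b ^ 4 = 1) (hk : b ^ 2 * a * b ^ 2 = a ^ (m + 1))
    (ham : a ^ m ≠ 1) (h : Commute a (b ^ j)) : b ^ j = 1 := by
  have not_commute_sq : ¬ Commute a (b ^ 2) := fun h2 => ham <| by
    rw [← h2.eq, mul_assoc, ← pow_add, hb, mul_one, pow_succ] at hk
    exact mul_eq_right.mp hk.symm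
  have h2 := h.pow_right 2
  rw [pow_eq_pow_mod_four hb j] at h h2 ⊢
  have : j % 4 < 4 := Nat.mod_lt _ (by norm_num)
  interval_cases j % 4
  · exact pow_zero b
  · exact absurd (by rwa [← pow_mul] at h2) not_commute_sq
  · exact absurd h not_commute_sq
  · refine absurd ?_ not_commute_sq
    rwa [← pow_mul, show 3 * 2 = 4 + 2 by rfl, pow_add, hb, one_mul] at h2

theorem exists_eq_zpow_mul_pow_of_closure_eq_top {m : ℕ} (hgen : closure {a, b} = ⊤)
    (ha : IsOfFinOrder a) (hb : b ^ 4 = 1) (hab : (a * b) ^ 2 = 1)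
    (hk : b ^ 2 * a * b ^ 2 = a ^ (m + 1)) (x : G) :
    ∃ (i : ℤ) (j : ℕ), x = a ^ i * b ^ j := by
  have mul_a_pow (k : ℕ) (x : G) (hx : ∃ (i : ℤ) (j : ℕ), x = a ^ i * b ^ j) :
      ∃ (i : ℤ) (j : ℕ), x * a ^ k = a ^ i * b ^ j := by
    induction k generalizing x with
    | zero => simpa using hx
    | succ k ih =>
      obtain ⟨i, j, hij⟩ := ih x hx
      obtain ⟨i', j', h⟩ := exists_pow_mul_eq_zpow_mul_pow hb hab hk j
      exact ⟨i + i', j', by rw [pow_succ, ← mul_assoc, hij, mul_assoc, h, zpow_add, mul_assoc]⟩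
  obtain ⟨k, hinv⟩ : a⁻¹ ∈ Submonoid.powers a :=
    ha.mem_powers_iff_mem_zpowers.mpr (inv_mem (mem_zpowers a))
  induction hgen ▸ mem_top x using closure_induction_right with
  | one => exact ⟨0, 0, by simp⟩
  | mul_right x _ y hy ih =>
    obtain rfl | rfl := hy
    · simpa using mul_a_pow 1 x ih
    · obtain ⟨i, j, rfl⟩ := ih
      exact ⟨i, j + 1, by rw [mul_assoc, pow_succ]⟩
  | mul_inv_cancel x _ y hy ih =>
    obtain rfl | rfl := hy
    · exact hinv ▸ mul_a_pow k x ih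
    · obtain ⟨i, j, rfl⟩ := ih
      exact ⟨i, j + 3, by rw [inv_eq_pow_three_of_pow_four hb, mul_assoc, pow_add]⟩

end Group

/- The action of `⟨a, b⟩` on the `2n` cosets `a^(2q+p)⟨b⟩`, labelled `(p, q) : ZMod 2 × ZMod n`.
Taking `c = 1` gives a model of `AM_g` and `c = 1 + n/2` one of `K_g`, where `n = g + 1`. -/
namespace CosetModel

variable (n : ℕ)

theorem val_add_one_add_val (p : ZMod 2) : ((p + 1).val : ZMod n) + p.val = 1 := by
  exact_mod_cast congrArg (Nat.cast : ℕ → ZMod n)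
    ((by decide : ∀ q : ZMod 2, (q + 1).val + q.val = 1) p)

theorem add_one_add_one (p : ZMod 2) : p + 1 + 1 = p :=
  (by decide : ∀ q : ZMod 2, q + 1 + 1 = q) p

def permA : Equiv.Perm (ZMod 2 × ZMod n) where
  toFun x := (x.1 + 1, x.2 + x.1.val)
  invFun x := (x.1 + 1, x.2 - (x.1 + 1).val)
  left_inv x := by simp [add_one_add_one]
  right_inv x := by simp [add_one_add_one]

def permB (c : (ZMod n)ˣ) : Equiv.Perm (ZMod 2 × ZMod n) where
  toFun x := (x.1, -c * x.2 - x.1.val)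
  invFun x := (x.1, -c⁻¹ * (x.2 + x.1.val))
  left_inv x := by simp
  right_inv x := by simp

theorem permA_apply (x) : permA n x = (x.1 + 1, x.2 + x.1.val) := rfl

theorem permB_apply (c x) : permB n c x = (x.1, -c * x.2 - x.1.val) := rfl

theorem permA_pow_apply_fst (k : ℕ) (x) : ((permA n ^ k) x).1 = x.1 + k := by
  induction k with
  | zero => simp
  | succ k ih => rw [pow_succ', Equiv.Perm.mul_apply, permA_apply, ih]; push_cast; ring

theorem permA_pow_two_mul_apply (k : ℕ) (x) : (permA n ^ (2 * k)) x = (x.1, x.2 + k) := by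
  induction k with
  | zero => simp
  | succ k ih =>
    rw [show 2 * (k + 1) = 2 + 2 * k by ring, pow_add, Equiv.Perm.mul_apply, ih, pow_two,
      Equiv.Perm.mul_apply, permA_apply, permA_apply]
    simp only [add_one_add_one, Prod.mk.injEq, true_and, Nat.cast_succ]
    linear_combination val_add_one_add_val n x.1

theorem orderOf_permA [NeZero n] : orderOf (permA n) = 2 * n := by
  refine Nat.dvd_antisymm
    (orderOf_dvd_of_pow_eq_one (Equiv.ext fun x => by simp [permA_pow_two_mul_apply])) ?_
  have h := pow_orderOf_eq_one (permA n)
  obtain ⟨k, hk⟩ : 2 ∣ orderOf (permA n) := by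
    have := congrArg (fun f : Equiv.Perm _ => (f (0, 0)).1) h
    simp only [permA_pow_apply_fst] at this
    simpa [ZMod.natCast_eq_zero_iff] using this
  rw [hk] at h ⊢
  refine mul_dvd_mul_left 2 ?_
  simpa [permA_pow_two_mul_apply, ZMod.natCast_eq_zero_iff] using
    congrArg (fun f : Equiv.Perm _ => (f (0, 0)).2) h

variable {n}

theorem permA_mul_permB_sq {c : (ZMod n)ˣ} (hc : c * c = 1) : (permA n * permB n c) ^ 2 = 1 := by
  ext x : 1
  simp only [pow_two, Equiv.Perm.mul_apply, permA_apply, permB_apply, add_one_add_one,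
    Equiv.Perm.one_apply]
  ext
  · rfl
  · have hc' : (c * c : ZMod n) = 1 := by rw [← Units.val_mul, hc, Units.val_one]
    simp only
    linear_combination x.2 * hc'

theorem permB_sq_apply (c : (ZMod n)ˣ) (x) :
    (permB n c ^ 2) x = (x.1, c * c * x.2 + (c - 1) * x.1.val) := by
  simp only [pow_two, Equiv.Perm.mul_apply, permB_apply]
  ext
  · rfl
  · simp only; ring

theorem permB_one_sq : permB n 1 ^ 2 = 1 := by
  ext x : 1
  simp [permB_sq_apply]

theorem kulkarniUnit_mul_self (hn : 4 ∣ n) :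
    (1 + (n / 2 : ℕ) : ZMod n) * (1 + (n / 2 : ℕ)) = 1 := by
  obtain ⟨M, rfl⟩ := hn
  have h0 : ((4 * M : ℕ) : ZMod (4 * M)) = 0 := ZMod.natCast_self _
  rw [show 4 * M / 2 = 2 * M by omega]
  push_cast at h0 ⊢
  linear_combination (M + 1 : ZMod (4 * M)) * h0

def kulkarniUnit (hn : 4 ∣ n) : (ZMod n)ˣ :=
  Units.mkOfMulEqOne _ _ (kulkarniUnit_mul_self hn)

theorem permB_kulkarniUnit_sq_apply (hn : 4 ∣ n) (x) :
    (permB n (kulkarniUnit hn) ^ 2) x = (x.1, x.2 + (n / 2 : ℕ) * x.1.val) := by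
  rw [permB_sq_apply]
  simp [kulkarniUnit, kulkarniUnit_mul_self hn]

theorem permB_kulkarniUnit_pow_four (hn : 4 ∣ n) : permB n (kulkarniUnit hn) ^ 4 = 1 := by
  ext x : 1
  rw [show 4 = 2 + 2 by rfl, pow_add, Equiv.Perm.mul_apply, permB_kulkarniUnit_sq_apply,
    permB_kulkarniUnit_sq_apply]
  have h : ((n / 2 : ℕ) : ZMod n) + (n / 2 : ℕ) = 0 := by
    rw [← Nat.cast_add, ← two_mul, Nat.mul_div_cancel' (dvd_trans (by norm_num) hn),
      ZMod.natCast_self]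
  simp only [Equiv.Perm.one_apply]
  ext
  · rfl
  · simp only; linear_combination x.1.val * h

theorem permB_kulkarniUnit_sq_conj (hn : 4 ∣ n) :
    permB n (kulkarniUnit hn) ^ 2 * permA n * permB n (kulkarniUnit hn) ^ 2 =
      permA n ^ (n + 1) := by
  have hpow : permA n ^ n = permA n ^ (2 * (n / 2)) :=
    congrArg (permA n ^ ·) (Nat.mul_div_cancel' (dvd_trans (by norm_num) hn)).symm
  ext x : 1
  rw [pow_succ' (permA n) n, hpow]
  simp only [Equiv.Perm.mul_apply, permA_pow_two_mul_apply, permB_kulkarniUnit_sq_apply,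
    permA_apply]
  ext
  · rfl
  · simp only; linear_combination (n / 2 : ℕ) * val_add_one_add_val n x.1

end CosetModel

theorem PresentedGroup.mem_center_of_commute_of {α : Type*} {rels : Set (FreeGroup α)}
    {z : PresentedGroup rels} (h : ∀ i, Commute (PresentedGroup.of i) z) : z ∈ center _ := by
  rw [center_eq_iInf (PresentedGroup.closure_range_of rels)]
  simp only [mem_iInf, Set.forall_mem_range, mem_centralizer_singleton_iff]
  exact fun i => (h i).eq.symm

theorem PresentedGroup.lift_of_eq_one {rels : Set (FreeGroup (Fin 2))} :
    ∀ r ∈ rels, FreeGroup.lift ![.of 0, .of 1] r = (1 : PresentedGroup rels) := by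
  rw [show FreeGroup.lift ![.of 0, .of 1] = PresentedGroup.mk rels from
    FreeGroup.ext_hom _ _ fun i => by fin_cases i <;> rfl]
  exact fun _ => PresentedGroup.one_of_mem

theorem PresentedGroup.closure_of_zero_of_one (rels : Set (FreeGroup (Fin 2))) :
    closure {PresentedGroup.of 0, PresentedGroup.of 1} = (⊤ : Subgroup (PresentedGroup rels)) := by
  rw [← PresentedGroup.closure_range_of]
  congr 1
  ext x
  simp [Fin.exists_fin_two, eq_comm]

section Presentations

variable {G : Type*} [Group G]

structure IsAccolaMaclachlanPair (g : ℕ) (a b : G) : Prop where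
  pow_a : a ^ (2 * g + 2) = 1
  pow_b : b ^ 4 = 1
  mul_sq : (a * b) ^ 2 = 1
  commute_sq : Commute a (b ^ 2)

structure IsKulkarniPair (g : ℕ) (a b : G) : Prop where
  pow_a : a ^ (2 * g + 2) = 1
  pow_b : b ^ 4 = 1
  mul_sq : (a * b) ^ 2 = 1
  conj_sq : b ^ 2 * a * b ^ 2 = a ^ (g + 2)

theorem lift_amRels_eq_one_iff {g : ℕ} {a b : G} :
    (∀ r ∈ amRels g, FreeGroup.lift ![a, b] r = 1) ↔ IsAccolaMaclachlanPair g a b := by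
  have hcomm : a⁻¹ * (b ^ 2)⁻¹ * a * b ^ 2 = 1 ↔ Commute a (b ^ 2) := by
    rw [show a⁻¹ * (b ^ 2)⁻¹ * a * b ^ 2 = (b ^ 2 * a)⁻¹ * (a * b ^ 2) by group, inv_mul_eq_one,
      eq_comm]
    rfl
  simp only [amRels, Set.mem_insert_iff, Set.mem_singleton_iff, forall_eq_or_imp, forall_eq,
    map_mul, map_pow, map_inv, FreeGroup.lift_apply_of, Matrix.cons_val_zero, Matrix.cons_val_one,
    hcomm]
  exact ⟨fun ⟨h₁, h₂, h₃, h₄⟩ => ⟨h₁, h₂, h₃, h₄⟩, fun ⟨h₁, h₂, h₃, h₄⟩ => ⟨h₁, h₂, h₃, h₄⟩⟩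

theorem lift_kRels_eq_one_iff {g : ℕ} {a b : G} :
    (∀ r ∈ kRels g, FreeGroup.lift ![a, b] r = 1) ↔ IsKulkarniPair g a b := by
  simp only [kRels, Set.mem_insert_iff, Set.mem_singleton_iff, forall_eq_or_imp, forall_eq,
    map_mul, map_pow, map_inv, FreeGroup.lift_apply_of, Matrix.cons_val_zero, Matrix.cons_val_one,
    mul_inv_eq_one]
  exact ⟨fun ⟨h₁, h₂, h₃, h₄⟩ => ⟨h₁, h₂, h₃, h₄⟩, fun ⟨h₁, h₂, h₃, h₄⟩ => ⟨h₁, h₂, h₃, h₄⟩⟩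

theorem isAccolaMaclachlanPair_ofAdd_one {g : ℕ} (hg : 4 ∣ 2 * g + 2) :
    IsAccolaMaclachlanPair g (Multiplicative.ofAdd (1 : ZMod 4)) (Multiplicative.ofAdd 1) where
  pow_a := orderOf_dvd_iff_pow_eq_one.mp
    (by rwa [orderOf_ofAdd_eq_addOrderOf, ZMod.addOrderOf_one])
  pow_b := by decide
  mul_sq := by decide
  commute_sq := Commute.all _ _

end Presentations

namespace CosetModel

theorem isAccolaMaclachlanPair (g : ℕ) :
    IsAccolaMaclachlanPair g (permA (g + 1)) (permB (g + 1) 1) where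
  pow_a := by rw [show 2 * g + 2 = 2 * (g + 1) by ring, ← orderOf_permA, pow_orderOf_eq_one]
  pow_b := by rw [show 4 = 2 * 2 by rfl, pow_mul, permB_one_sq, one_pow]
  mul_sq := permA_mul_permB_sq (one_mul 1)
  commute_sq := by rw [permB_one_sq]; exact Commute.one_right _

theorem isKulkarniPair {g : ℕ} (hg : 4 ∣ g + 1) :
    IsKulkarniPair g (permA (g + 1)) (permB (g + 1) (kulkarniUnit hg)) where
  pow_a := by rw [show 2 * g + 2 = 2 * (g + 1) by ring, ← orderOf_permA, pow_orderOf_eq_one]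
  pow_b := permB_kulkarniUnit_pow_four hg
  mul_sq := permA_mul_permB_sq (Units.ext (kulkarniUnit_mul_self hg))
  conj_sq := permB_kulkarniUnit_sq_conj hg

end CosetModel

namespace AccolaMaclachlan

variable {g : ℕ}

local notation "a" => (PresentedGroup.of 0 : PresentedGroup (amRels g))
local notation "b" => (PresentedGroup.of 1 : PresentedGroup (amRels g))

theorem isAccolaMaclachlanPair_of : IsAccolaMaclachlanPair g a b :=
  lift_amRels_eq_one_iff.mp PresentedGroup.lift_of_eq_one

theorem orderOf_of_zero : orderOf a = 2 * (g + 1) :=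
  orderOf_eq_of_pow_eq_one_of_orderOf_map isAccolaMaclachlanPair_of.pow_a
    (PresentedGroup.toGroup (lift_amRels_eq_one_iff.mpr (CosetModel.isAccolaMaclachlanPair g)))
    (by simpa [PresentedGroup.toGroup.of] using CosetModel.orderOf_permA (g + 1))

theorem pow_mem_centralInvolutions (hg : Even (g + 1)) : a ^ (g + 1) ∈ centralInvolutions _ := by
  have h := isAccolaMaclachlanPair_of (g := g)
  refine ⟨PresentedGroup.mem_center_of_commute_of (Fin.forall_fin_two.mpr
    ⟨(Commute.refl a).pow_right _, ?_⟩), ?_⟩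
  · exact commute_pow_of_commute_sq h.pow_b h.mul_sq h.commute_sq h.pow_a hg
  · rw [orderOf_pow_of_dvd (by omega) (by rw [orderOf_of_zero]; exact dvd_mul_left _ _),
      orderOf_of_zero, Nat.mul_div_cancel _ (by omega)]

def toZMod4 (hg : 4 ∣ 2 * g + 2) : PresentedGroup (amRels g) →* Multiplicative (ZMod 4) :=
  PresentedGroup.toGroup (lift_amRels_eq_one_iff.mpr (isAccolaMaclachlanPair_ofAdd_one hg))

theorem toZMod4_of (hg : 4 ∣ 2 * g + 2) (i : Fin 2) :
    toZMod4 hg (.of i) = Multiplicative.ofAdd 1 :=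
  (PresentedGroup.toGroup.of _).trans (by fin_cases i <;> rfl)

theorem sq_ne_one (hg : 4 ∣ 2 * g + 2) : b ^ 2 ≠ 1 := fun h =>
  absurd (by simpa [toZMod4_of hg] using congrArg (toZMod4 hg) h)
    (by decide : Multiplicative.ofAdd (1 : ZMod 4) ^ 2 ≠ 1)

theorem pow_ne_sq (hg : 4 ∣ g + 1) : a ^ (g + 1) ≠ b ^ 2 := fun h => by
  have hpow : (Multiplicative.ofAdd (1 : ZMod 4)) ^ (g + 1) = 1 := orderOf_dvd_iff_pow_eq_one.mp
    (by rwa [orderOf_ofAdd_eq_addOrderOf, ZMod.addOrderOf_one])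
  have h4 : 4 ∣ 2 * g + 2 := by omega
  exact absurd (by simpa [toZMod4_of h4, hpow, eq_comm] using congrArg (toZMod4 h4) h)
    (by decide : Multiplicative.ofAdd (1 : ZMod 4) ^ 2 ≠ 1)

theorem sq_mem_centralInvolutions (hg : 4 ∣ 2 * g + 2) : b ^ 2 ∈ centralInvolutions _ :=
  ⟨PresentedGroup.mem_center_of_commute_of (Fin.forall_fin_two.mpr
      ⟨isAccolaMaclachlanPair_of.commute_sq, Commute.self_pow _ 2⟩),
    orderOf_eq_prime (by rw [← pow_mul]; exact isAccolaMaclachlanPair_of.pow_b) (sq_ne_one hg)⟩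

theorem not_subsingleton_centralInvolutions (hg : 4 ∣ g + 1) :
    ¬ (centralInvolutions (PresentedGroup (amRels g))).Subsingleton := fun hs =>
  pow_ne_sq hg (hs (pow_mem_centralInvolutions (even_iff_two_dvd.mpr (by omega)))
    (sq_mem_centralInvolutions (by omega)))

end AccolaMaclachlan

namespace Kulkarni

variable {g : ℕ}

local notation "a" => (PresentedGroup.of 0 : PresentedGroup (kRels g))
local notation "b" => (PresentedGroup.of 1 : PresentedGroup (kRels g))

theorem isKulkarniPair_of : IsKulkarniPair g a b :=
  lift_kRels_eq_one_iff.mp PresentedGroup.lift_of_eq_one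

theorem orderOf_of_zero (hg : 4 ∣ g + 1) : orderOf a = 2 * (g + 1) :=
  orderOf_eq_of_pow_eq_one_of_orderOf_map isKulkarniPair_of.pow_a
    (PresentedGroup.toGroup (lift_kRels_eq_one_iff.mpr (CosetModel.isKulkarniPair hg)))
    (by simpa [PresentedGroup.toGroup.of] using CosetModel.orderOf_permA (g + 1))

theorem exists_eq_zpow_mul_pow (x : PresentedGroup (kRels g)) :
    ∃ (i : ℤ) (j : ℕ), x = a ^ i * b ^ j :=
  have h := isKulkarniPair_of (g := g)
  exists_eq_zpow_mul_pow_of_closure_eq_top (PresentedGroup.closure_of_zero_of_one _)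
    (isOfFinOrder_iff_pow_eq_one.mpr ⟨_, by omega, h.pow_a⟩) h.pow_b h.mul_sq h.conj_sq x

theorem centralInvolutions_subset (hg : 4 ∣ g + 1) :
    centralInvolutions (PresentedGroup (kRels g)) ⊆ {a ^ (g + 1)} := by
  rintro z ⟨hz, hz2⟩
  have h := isKulkarniPair_of (g := g)
  obtain ⟨i, j, rfl⟩ := exists_eq_zpow_mul_pow z
  have hbj : b ^ j = 1 := by
    refine pow_eq_one_of_commute h.pow_b h.conj_sq
      (pow_ne_one_of_lt_orderOf (by omega) (by rw [orderOf_of_zero hg]; omega)) ?_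
    simpa using ((Commute.refl a).zpow_right i).inv_right.mul_right (mem_center_iff.mp hz a)
  rw [hbj, mul_one] at hz2 ⊢
  exact zpow_eq_pow_of_orderOf_zpow_eq_two (orderOf_of_zero hg) hz2

end Kulkarni

/-- For `g ≡ 3 (mod 4)`, the Accola–Maclachlan group `AM_g` and the Kulkarni group
`K_g` are not isomorphic. -/
theorem am_not_iso_kulkarni (g : ℕ) (hg : g % 4 = 3) :
    IsEmpty (PresentedGroup (amRels g) ≃* PresentedGroup (kRels g)) := by
  have h4 : 4 ∣ g + 1 := by omega
  exact ⟨fun e => AccolaMaclachlan.not_subsingleton_centralInvolutions h4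
    (e.centralInvolutions_subsingleton
      (Set.subsingleton_singleton.anti (Kulkarni.centralInvolutions_subset h4)))⟩
end

section
/- In the Kulkarni setting with g ≡ 3 (mod 4): there exists φ = (s, v) ∈ D_{2g+2} ⋉ (ℤ/2)³ with s = (r₁r₂)^{±(g+1)/2} and φ² = d = ((r₁r₂)^{g+1}, e₁+e₃) if and only if g ≡ 3 (mod 8). -/
/-!
Put `A = M1 * M2`, the matrix by which `r₁r₂ = r 1` acts; it has order `4`. The square of
`(v, r k)` is `(v + Aᵏ v, r (2k))`, and `k = (g+1)/2` is `≡ 2 (mod 4)` if `g ≡ 3 (mod 8)` and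
`≡ 0 (mod 4)` if `g ≡ 7 (mod 8)`. In the first case `v = e₁` works, as `A² e₁ = e₃`. In the second
`r (±k)` acts trivially, so the square has left component `v + v = 0 ≠ e₁ + e₃`.
-/

/-- The matrix `Φ(r₁)` over `𝔽₂`. -/
def M1 : Matrix (Fin 3) (Fin 3) (ZMod 2) := !![1,1,0; 0,1,0; 0,1,1]

/-- The matrix `Φ(r₂)` over `𝔽₂`. -/
def M2 : Matrix (Fin 3) (Fin 3) (ZMod 2) := !![0,1,1; 1,0,1; 0,0,1]

/-- `(ℤ/2)³`, written multiplicatively. -/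
abbrev V3 : Type := Multiplicative (Fin 3 → ZMod 2)

namespace MulAut

variable {ι R : Type*} [Fintype ι] [Semiring R]

structure ActsByMatrix (f : MulAut (Multiplicative (ι → R))) (M : Matrix ι ι R) : Prop where
  apply_ofAdd (v : ι → R) : f (Multiplicative.ofAdd v) = Multiplicative.ofAdd (M.mulVec v)

namespace ActsByMatrix

variable {f f' : MulAut (Multiplicative (ι → R))} {M M' : Matrix ι ι R}

theorem one [DecidableEq ι] : ActsByMatrix (1 : MulAut (Multiplicative (ι → R))) 1 :=
  ⟨fun v => by simp⟩

theorem mul (hf : ActsByMatrix f M) (hf' : ActsByMatrix f' M') :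
    ActsByMatrix (f * f') (M * M') :=
  ⟨fun v => by rw [MulAut.mul_apply, hf'.apply_ofAdd, hf.apply_ofAdd, Matrix.mulVec_mulVec]⟩

theorem pow [DecidableEq ι] (hf : ActsByMatrix f M) (k : ℕ) : ActsByMatrix (f ^ k) (M ^ k) := by
  induction k with
  | zero => exact one
  | succ k ih => rw [pow_succ, pow_succ]; exact ih.mul hf

theorem eq_one [DecidableEq ι] (hf : ActsByMatrix f 1) : f = 1 :=
  MulEquiv.ext fun v => by simpa using hf.apply_ofAdd (Multiplicative.toAdd v)

end ActsByMatrix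

end MulAut

open MulAut

theorem DihedralGroup.sr_zero_mul_sr_one_pow {n : ℕ} (k : ℕ) :
    (sr 0 * sr 1 : DihedralGroup n) ^ k = r k := by
  rw [sr_mul_sr, sub_zero, r_one_pow]

theorem SemidirectProduct.left_mul_self_eq_one {N G : Type*} [Group N] [Group G]
    {φ : G →* MulAut N} (hN : ∀ n : N, n * n = 1) (x : N ⋊[φ] G) (hx : φ x.right = 1) :
    (x * x).left = 1 := by
  rw [mul_left, hx, MulAut.one_apply, hN]

theorem M1_mul_M2_pow_four : (M1 * M2) ^ 4 = 1 := by decide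

theorem M1_mul_M2_sq_mulVec_e₁ : ((M1 * M2) ^ 2).mulVec ![1, 0, 0] = ![0, 0, 1] := by decide

theorem Multiplicative.mul_self_eq_one_of_charTwo {ι R : Type*} [Ring R] [CharP R 2]
    (v : Multiplicative (ι → R)) : v * v = 1 := by
  funext i
  exact CharTwo.add_self_eq_zero (Multiplicative.toAdd v i)

/-- In the Kulkarni setting (`g ≡ 3 (mod 4)`, `G = D_{2g+2} ⋉ (ℤ/2)³` with the action
of the reflections `r₁ = sr 0`, `r₂ = sr 1` given by the matrices `M1`, `M2` over
`𝔽₂`): there exists `φ' = (s, v) ∈ G` with `s = (r₁r₂)^(±(g+1)/2)` and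
`φ'² = d = ((r₁r₂)^(g+1), e₁+e₃)` if and only if `g ≡ 3 (mod 8)`. -/
theorem kulkarni_square_root_iff (g : ℕ) (hg : g % 4 = 3)
    (φ : DihedralGroup (2 * g + 2) →* MulAut V3)
    (h1 : ∀ v : Fin 3 → ZMod 2,
      φ (DihedralGroup.sr 0) (Multiplicative.ofAdd v) = Multiplicative.ofAdd (M1.mulVec v))
    (h2 : ∀ v : Fin 3 → ZMod 2,
      φ (DihedralGroup.sr 1) (Multiplicative.ofAdd v) = Multiplicative.ofAdd (M2.mulVec v)) :
    let d : V3 ⋊[φ] DihedralGroup (2 * g + 2) :=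
      ⟨Multiplicative.ofAdd ![1, 0, 1], DihedralGroup.r ((g + 1 : ℕ) : ZMod (2 * g + 2))⟩
    (∃ x : V3 ⋊[φ] DihedralGroup (2 * g + 2),
        (x.right = DihedralGroup.r (((g + 1) / 2 : ℕ) : ZMod (2 * g + 2)) ∨
          x.right = DihedralGroup.r (-(((g + 1) / 2 : ℕ) : ZMod (2 * g + 2)))) ∧
        x * x = d) ↔ g % 8 = 3 := by
  intro d
  set k := (g + 1) / 2
  have hφr : ActsByMatrix (φ (DihedralGroup.r k)) ((M1 * M2) ^ k) := by
    rw [← DihedralGroup.sr_zero_mul_sr_one_pow, map_pow, map_mul]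
    exact (ActsByMatrix.mul ⟨h1⟩ ⟨h2⟩).pow k
  constructor
  · rintro ⟨x, hx, hxx⟩
    by_contra h
    have hAk : (M1 * M2) ^ k = 1 := by
      rw [pow_eq_pow_mod k M1_mul_M2_pow_four, show k % 4 = 0 by omega, pow_zero]
    have hφx : φ x.right = 1 := by
      rw [hAk] at hφr
      rcases hx with hx | hx
      · rw [hx, hφr.eq_one]
      · rw [hx, ← DihedralGroup.inv_r, map_inv, hφr.eq_one, inv_one]
    have hleft := SemidirectProduct.left_mul_self_eq_one
      Multiplicative.mul_self_eq_one_of_charTwo x hφx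
    rw [hxx] at hleft
    exact absurd (congrFun (congrArg Multiplicative.toAdd hleft) 0) (by simp [d])
  · intro h
    have hAk : (M1 * M2) ^ k = (M1 * M2) ^ 2 := by
      rw [pow_eq_pow_mod k M1_mul_M2_pow_four, show k % 4 = 2 by omega]
    refine ⟨⟨Multiplicative.ofAdd ![1, 0, 0], DihedralGroup.r k⟩, Or.inl rfl, ?_⟩
    apply SemidirectProduct.ext
    · rw [SemidirectProduct.mul_left, hφr.apply_ofAdd, hAk, M1_mul_M2_sq_mulVec_e₁, ← ofAdd_add]
      exact congrArg Multiplicative.ofAdd (by decide)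
    · rw [SemidirectProduct.mul_right, DihedralGroup.r_mul_r, ← Nat.cast_add,
        show k + k = g + 1 by omega]
end
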